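/- Under the assumptions of the previous statement (divergence $D$ with properties D3–D5, bounded measurable $\pi$, $\bar\pi=\mathbb{E}_P[\pi\mid\mathcal{E}]$), the constrained minimum over coarse beliefs characterizes the worst case of $\bar\pi$: $\inf\{\mathbb{E}_Q[\bar\pi] : D(Q\|P)\le\eta\} = \inf\{\mathbb{E}_Q[\pi] : D(Q\|P)\le\eta,\ dQ/dP \text{ is } \mathcal{E}\text{-measurable}\}$. -/

import Mathlib

/-!
If `dQ/dP` is `m`-measurable, the pull-out property of `P[·|m]` gives
`E_Q[π] = E_P[(dQ/dP) π] = E_P[(dQ/dP) P[π|m]] = E_Q[P[π|m]]`.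
Conversely, any `Q` in the divergence ball can be replaced by `Q̄ = (dQ|_m / dP|_m) · P`:
it agrees with `Q` on `m`, so `E_Q̄[P[π|m]] = E_Q[P[π|m]]`; its density is `m`-measurable;
and by D4–D5 its divergence is `D(Q|_m ‖ P|_m) ≤ D(Q ‖ P)`. Hence both infima range over
the same set of values.
-/

open MeasureTheory
open scoped ENNReal

namespace MeasureTheory

variable {Ω : Type*} {m m0 : MeasurableSpace Ω}

lemma integral_condExp_eq_integral_of_rnDeriv_ae_eq (hm : m ≤ m0) {P Q : Measure Ω}
    [SigmaFinite (P.trim hm)] [SigmaFinite Q] [Q.HaveLebesgueDecomposition P] (hQP : Q ≪ P)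
    {f : Ω → ℝ≥0∞} (hf : Measurable[m] f) (hQf : Q.rnDeriv P =ᵐ[P] f)
    {π : Ω → ℝ} (hπP : Integrable π P) (hπQ : Integrable π Q) :
    ∫ ω, (P[π|m]) ω ∂Q = ∫ ω, π ω ∂Q := by
  set ρ : Ω → ℝ := fun ω => (Q.rnDeriv P ω).toReal
  have hρ : AEStronglyMeasurable[m] ρ P :=
    ⟨_, hf.ennreal_toReal.stronglyMeasurable, hQf.fun_comp ENNReal.toReal⟩
  have hρπ : Integrable (ρ * π) P := (integrable_toReal_rnDeriv_mul_iff hQP).2 hπQ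
  calc ∫ ω, (P[π|m]) ω ∂Q = ∫ ω, (ρ * P[π|m]) ω ∂P :=
        (integral_toReal_rnDeriv_mul hQP).symm
    _ = ∫ ω, (P[ρ * π|m]) ω ∂P :=
        integral_congr_ae (condExp_mul_of_aestronglyMeasurable_left hρ hρπ hπP).symm
    _ = ∫ ω, (ρ * π) ω ∂P := integral_condExp hm
    _ = ∫ ω, π ω ∂Q := integral_toReal_rnDeriv_mul hQP

lemma integral_eq_of_trim_eq (hm : m ≤ m0) {μ ν : Measure Ω} (h : μ.trim hm = ν.trim hm)
    {f : Ω → ℝ} (hf : StronglyMeasurable[m] f) : ∫ ω, f ω ∂μ = ∫ ω, f ω ∂ν := by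
  rw [integral_trim hm hf, integral_trim hm hf, h]

lemma isProbabilityMeasure_of_trim_eq (hm : m ≤ m0) {μ ν : Measure Ω} [IsProbabilityMeasure ν]
    (h : μ.trim hm = ν.trim hm) : IsProbabilityMeasure μ := by
  constructor
  rw [← trim_measurableSet_eq hm .univ, h, trim_measurableSet_eq hm .univ, measure_univ]

noncomputable def coarseBelief (hm : m ≤ m0) (P Q : Measure Ω) : Measure Ω :=
  P.withDensity ((Q.trim hm).rnDeriv (P.trim hm))

section coarseBelief

variable (hm : m ≤ m0) {P Q : Measure Ω}

lemma trim_coarseBelief [SigmaFinite (P.trim hm)]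
    [(Q.trim hm).HaveLebesgueDecomposition (P.trim hm)] (hQP : Q ≪ P) :
    (coarseBelief hm P Q).trim hm = Q.trim hm := by
  rw [coarseBelief, trim_withDensity hm (Measure.measurable_rnDeriv _ _),
    Measure.withDensity_rnDeriv_eq _ _ (hQP.trim hm)]

lemma rnDeriv_coarseBelief [SigmaFinite P] :
    (coarseBelief hm P Q).rnDeriv P =ᵐ[P] (Q.trim hm).rnDeriv (P.trim hm) :=
  Measure.rnDeriv_withDensity P ((Measure.measurable_rnDeriv _ _).mono hm le_rfl)

lemma divergence_coarseBelief_le [SigmaFinite P] [SigmaFinite (P.trim hm)]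
    [(Q.trim hm).HaveLebesgueDecomposition (P.trim hm)]
    (D : ∀ m : MeasurableSpace Ω, @Measure Ω m → @Measure Ω m → ℝ≥0∞)
    (hD4 : ∀ Q : Measure Ω, D m (Q.trim hm) (P.trim hm) ≤ D m0 Q P)
    (hD5 : ∀ Q : Measure Ω, Q ≪ P →
      ((fun ω => (Q.trim hm).rnDeriv (P.trim hm) ω) =ᵐ[P] fun ω => Q.rnDeriv P ω) →
      D m (Q.trim hm) (P.trim hm) = D m0 Q P)
    (hQP : Q ≪ P) : D m0 (coarseBelief hm P Q) P ≤ D m0 Q P := by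
  have htrim := trim_coarseBelief hm hQP
  have hdensity : (fun ω => ((coarseBelief hm P Q).trim hm).rnDeriv (P.trim hm) ω)
      =ᵐ[P] fun ω => (coarseBelief hm P Q).rnDeriv P ω := by
    rw [htrim]
    exact (rnDeriv_coarseBelief hm).symm
  calc D m0 (coarseBelief hm P Q) P
      = D m ((coarseBelief hm P Q).trim hm) (P.trim hm) :=
        (hD5 _ (withDensity_absolutelyContinuous _ _) hdensity).symm
    _ = D m (Q.trim hm) (P.trim hm) := by rw [htrim]
    _ ≤ D m0 Q P := hD4 Q

end coarseBelief

end MeasureTheory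

theorem worstCase_condexp_eq_coarse_general
    {Ω : Type*} {m0 : MeasurableSpace Ω}
    (D : ∀ m : MeasurableSpace Ω, @Measure Ω m → @Measure Ω m → ℝ≥0∞)
    (P : Measure Ω) [IsProbabilityMeasure P]
    (hD3 : ∀ Q : Measure Ω, D m0 Q P ≠ ⊤ → Q ≪ P)
    (hD4 : ∀ (m : MeasurableSpace Ω) (hm : m ≤ m0) (Q : @Measure Ω m0),
      D m (Q.trim hm) (P.trim hm) ≤ D m0 Q P)
    (hD5 : ∀ (m : MeasurableSpace Ω) (hm : m ≤ m0) (Q : @Measure Ω m0), Q ≪ P →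
      ((fun ω => (Q.trim hm).rnDeriv (P.trim hm) ω) =ᵐ[P] fun ω => Q.rnDeriv P ω) →
      D m (Q.trim hm) (P.trim hm) = D m0 Q P)
    (η : ℝ≥0∞) (hη' : η ≠ ⊤)
    (π : Ω → ℝ) (hπm : Measurable π) (hπb : ∃ C, ∀ ω, |π ω| ≤ C)
    {m : MeasurableSpace Ω} (hm : m ≤ m0) :
    sInf {r : ℝ | ∃ Q : @Measure Ω m0, IsProbabilityMeasure Q ∧ D m0 Q P ≤ η ∧
        r = ∫ ω, (P[π|m]) ω ∂Q}
      = sInf {r : ℝ | ∃ Q : @Measure Ω m0, IsProbabilityMeasure Q ∧ D m0 Q P ≤ η ∧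
          (∃ f : Ω → ℝ≥0∞, Measurable[m] f ∧ (fun ω => Q.rnDeriv P ω) =ᵐ[P] f) ∧
          r = ∫ ω, π ω ∂Q} := by
  obtain ⟨C, hC⟩ := hπb
  have hπ (Q : @Measure Ω m0) [IsFiniteMeasure Q] : Integrable π Q :=
    .of_bound hπm.aestronglyMeasurable C (.of_forall hC)
  have hac {Q : @Measure Ω m0} (hQ : D m0 Q P ≤ η) : Q ≪ P :=
    hD3 Q (ne_top_of_le_ne_top hη' hQ)
  congr 1
  ext r
  constructor
  · rintro ⟨Q, hQ, hQη, rfl⟩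
    have htrim := trim_coarseBelief hm (hac hQη)
    have hdensity := rnDeriv_coarseBelief hm (P := P) (Q := Q)
    have hprob : IsProbabilityMeasure (coarseBelief hm P Q) :=
      isProbabilityMeasure_of_trim_eq hm htrim
    refine ⟨coarseBelief hm P Q, hprob,
      (divergence_coarseBelief_le hm D (hD4 m hm) (hD5 m hm) (hac hQη)).trans hQη,
      ⟨_, Measure.measurable_rnDeriv _ _, hdensity⟩, ?_⟩
    rw [← integral_eq_of_trim_eq hm htrim stronglyMeasurable_condExp]
    exact integral_condExp_eq_integral_of_rnDeriv_ae_eq hm (Q := coarseBelief hm P Q)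
      (withDensity_absolutelyContinuous _ _)
      (Measure.measurable_rnDeriv _ _) hdensity (hπ P) (hπ (coarseBelief hm P Q))
  · rintro ⟨Q, hQ, hQη, ⟨f, hf, hQf⟩, rfl⟩
    exact ⟨Q, hQ, hQη,
      (integral_condExp_eq_integral_of_rnDeriv_ae_eq hm (hac hQη) hf hQf (hπ P) (hπ Q)).symm⟩

/-- The worst case of the conditional expectation `E_P[π|m]` over the divergence
ball equals the worst case of `π` over beliefs in the ball whose density with
respect to `P` is `m`-measurable (key identity in the proof of Proposition 3). -/
theorem worstCase_condexp_eq_coarse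
    {Ω : Type*} {m0 : MeasurableSpace Ω}
    (D : ∀ m : MeasurableSpace Ω, @Measure Ω m → @Measure Ω m → ℝ≥0∞)
    (P : Measure Ω) [IsProbabilityMeasure P]
    (hD3 : ∀ Q : Measure Ω, D m0 Q P ≠ ⊤ → Q ≪ P)
    (hD4 : ∀ (m : MeasurableSpace Ω) (hm : m ≤ m0) (Q : @Measure Ω m0),
      D m (Q.trim hm) (P.trim hm) ≤ D m0 Q P)
    (hD5 : ∀ (m : MeasurableSpace Ω) (hm : m ≤ m0) (Q : @Measure Ω m0), Q ≪ P →
      ((fun ω => (Q.trim hm).rnDeriv (P.trim hm) ω) =ᵐ[P] fun ω => Q.rnDeriv P ω) →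
      D m (Q.trim hm) (P.trim hm) = D m0 Q P)
    (η : ℝ≥0∞) (hη : 0 < η) (hη' : η ≠ ⊤)
    (π : Ω → ℝ) (hπm : Measurable π) (hπb : ∃ C, ∀ ω, |π ω| ≤ C)
    {m : MeasurableSpace Ω} (hm : m ≤ m0) :
    sInf {r : ℝ | ∃ Q : @Measure Ω m0, IsProbabilityMeasure Q ∧ D m0 Q P ≤ η ∧
        r = ∫ ω, (P[π|m]) ω ∂Q}
      = sInf {r : ℝ | ∃ Q : @Measure Ω m0, IsProbabilityMeasure Q ∧ D m0 Q P ≤ η ∧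
          (∃ f : Ω → ℝ≥0∞, Measurable[m] f ∧ (fun ω => Q.rnDeriv P ω) =ᵐ[P] f) ∧
          r = ∫ ω, π ω ∂Q} :=
  worstCase_condexp_eq_coarse_general D P hD3 hD4 hD5 η hη' π hπm hπb hm
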